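/- Let R be a commutative ring, let a, b ∈ R satisfy a·b = 2, let S be a commutative R-algebra, and let s ∈ S satisfy s² = a·s. Let σ_s be the S-algebra endomorphism of T = S[x₁, y₁, …, xₙ, yₙ] determined by σ_s(x_i) = x_i and σ_s(y_i) = s·x_i + (1 − b·s)·y_i. Then for all indices i, j the quadric x_i·y_j + x_j·y_i − b·y_i·y_j is fixed by σ_s, i.e. σ_s(x_i·y_j + x_j·y_i − b·y_i·y_j) = x_i·y_j + x_j·y_i − b·y_i·y_j. (When 2 = 0 in R this quadric coincides with x_i·y_j + x_j·y_i + b·y_i·y_j.) -/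

import Mathlib

open MvPolynomial

/-! The substitution is the linear map `(x, y) ↦ (x, s x + (1 - b s) y)` applied to each pair of
variables, and the quadric is the symmetric bilinear form `B(v, w) = x y' + x' y - b y y'`.
Expanding `B(σ v, σ w)`, the coefficient of `x x'` is `2 s - b s²` and that of the remaining part
is `(1 - b s)²`; both are settled by `b s² = 2 s`, which follows from `s² = a s` and `a b = 2`. -/

section TateOortQuadric

variable {A : Type*} [CommRing A] {b s : A}

theorem one_sub_mul_sq_eq_one (h : b * s ^ 2 = 2 * s) : (1 - b * s) ^ 2 = 1 := by
  linear_combination b * h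

theorem quadric_invariant_of_mul_sq_eq_two_mul (h : b * s ^ 2 = 2 * s) (x y x' y' : A) :
    x * (s * x' + (1 - b * s) * y') + x' * (s * x + (1 - b * s) * y)
        - b * (s * x + (1 - b * s) * y) * (s * x' + (1 - b * s) * y')
      = x * y' + x' * y - b * y * y' := by
  linear_combination (-(x * x')) * h + (x * y' + x' * y - b * y * y') * one_sub_mul_sq_eq_one h

end TateOortQuadric

-- `X (i, false)` is `xᵢ` and `X (i, true)` is `yᵢ`.
/-- **Invariance of the quadrics `xᵢ·yⱼ + xⱼ·yᵢ - b·yᵢ·yⱼ`.**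
Variables of `S[x₁,y₁,…,xₙ,yₙ]` are indexed by `Fin n × Bool`, with
`X (i, false) = xᵢ` and `X (i, true) = yᵢ`.  For `s ∈ S` with `s² = a·s`, the
substitution `σ s` (fixing each `xᵢ` and sending `yᵢ ↦ s·xᵢ + (1 - b·s)·yᵢ`)
fixes the quadric `xᵢ·yⱼ + xⱼ·yᵢ - b·yᵢ·yⱼ` for all `i, j`.
(When `2 = 0` in `R` this quadric coincides with `xᵢ·yⱼ + xⱼ·yᵢ + b·yᵢ·yⱼ`.) -/
theorem stmt_5 (R S : Type*) [CommRing R] [CommRing S] [Algebra R S] (n : ℕ)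
    (a b : R) (hab : a * b = 2)
    (s : S) (hs : s ^ 2 = algebraMap R S a * s) :
    let b' : S := algebraMap R S b
    let σ : MvPolynomial (Fin n × Bool) S →ₐ[S] MvPolynomial (Fin n × Bool) S :=
      aeval (fun v : Fin n × Bool =>
        if v.2 then C s * X (v.1, false) + C (1 - b' * s) * X (v.1, true)
        else X v)
    ∀ i j : Fin n,
      σ (X (i, false) * X (j, true) + X (j, false) * X (i, true)
          - C b' * X (i, true) * X (j, true))
        = X (i, false) * X (j, true) + X (j, false) * X (i, true)
          - C b' * X (i, true) * X (j, true) := by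
  intro b' σ i j
  have hbs : b' * s ^ 2 = 2 * s := by
    rw [hs, ← mul_assoc, ← map_mul, mul_comm b, hab, map_ofNat]
  have hbs_C : C (σ := Fin n × Bool) b' * C s ^ 2 = 2 * C s := by
    rw [← map_pow, ← map_mul, hbs, map_mul, map_ofNat]
  simp only [σ, map_add, map_sub, map_mul, aeval_X, aeval_C, algebraMap_eq, if_true,
    Bool.false_eq_true, if_false, map_one]
  exact quadric_invariant_of_mul_sq_eq_two_mul hbs_C _ _ _ _
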